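/- Assume b ≤ ω₁, and fix a family {f_α ∈ ω^ω : α < ω₁} such that for every g ∈ ω^ω there exists α < ω₁ with f_α(n) > g(n) for infinitely many n. For each α < ω₁ set G_α = {(a(n,m), x(α,m)) : m ≤ f_α(n), n ∈ ω} ⊆ S_ω × S_{ω₁}. Then each G_α is clopen in S_ω × S_{ω₁}, the family {G_α : α < ω₁} is compact-finite, and the point (a₀, ∞) lies in the closure of the union ⋃_{α<ω₁} G_α; hence {G_α} is not locally finite at (a₀, ∞). -/

import Mathlib

open Set Filter Topology Cardinal

/-- The sequential fan with spokes indexed by `κ`: underlying set is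
`Option (κ × ℕ)`, with `none` the apex and `some (α, n)` the `n`-th point
of the `α`-th spoke. -/
def Fan (κ : Type*) : Type _ := Option (κ × ℕ)

/-- The quotient topology on the fan: each point `some (α, n)` is isolated and
a set containing the apex is open iff it contains a tail of every spoke. -/
instance Fan.instTopologicalSpace (κ : Type*) : TopologicalSpace (Fan κ) where
  IsOpen s := (none : Option (κ × ℕ)) ∈ s → ∀ α : κ, {n : ℕ | (some (α, n) : Option (κ × ℕ)) ∉ s}.Finite
  isOpen_univ := by intro _ α; exact Set.finite_empty.subset (fun n hn => hn (Set.mem_univ _))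
  isOpen_inter := by
    intro s t hs ht hmem α
    refine ((hs hmem.1 α).union (ht hmem.2 α)).subset ?_
    intro n hn
    by_contra h
    simp only [Set.mem_union, Set.mem_setOf_eq] at h
    push_neg at h
    exact hn ⟨h.1, h.2⟩
  isOpen_sUnion := by
    intro S hS hmem α
    obtain ⟨s, hsS, hs⟩ := hmem
    refine (hS s hsS hs α).subset ?_
    intro n hn hns
    exact hn (Set.mem_sUnion.2 ⟨s, hsS, hns⟩)

/-- The apex of the sequential fan. -/
def Fan.apex {κ : Type*} : Fan κ := (none : Option (κ × ℕ))

/-- The `n`-th point of the `α`-th spoke of the sequential fan. -/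
def Fan.pt {κ : Type*} (α : κ) (n : ℕ) : Fan κ := (some (α, n) : Option (κ × ℕ))

/-! Every point of `G_α` is a pair of isolated points, so `G_α` is open; it is closed as the
part, over the closed set `{a(n,m) : m ≤ f_α(n)}`, of the graph of the continuous map
`S_ω → S_{ω₁}` collapsing all spokes onto the `α`-th one. A compact subset of a fan meets only
finitely many spokes, whence compact-finiteness. A neighbourhood of `(a₀, ∞)` contains the
points `a(n,m)`, `m ≥ N(n)`, and `x(α,m)`, `m ≥ M(α)`; it meets `G_α` at
`(a(n, f_α(n)), x(α, f_α(n)))` as soon as `f_α(n) > max (N(n), n)` for some `n > M(α)`, and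
unboundedness of the family (which no finite subfamily can absorb) gives infinitely many such
`α`. -/

namespace Fan

variable {κ κ' : Type*}

lemma isOpen_iff {s : Set (Fan κ)} :
    IsOpen s ↔ ((apex : Fan κ) ∈ s → ∀ β : κ, {m : ℕ | pt β m ∉ s}.Finite) := Iff.rfl

lemma isClosed_iff {s : Set (Fan κ)} :
    IsClosed s ↔ ((apex : Fan κ) ∉ s → ∀ β : κ, {m : ℕ | pt β m ∈ s}.Finite) := by
  simp only [← isOpen_compl_iff, isOpen_iff, mem_compl_iff, not_not]

lemma isOpen_of_apex_notMem {s : Set (Fan κ)} (h : (apex : Fan κ) ∉ s) : IsOpen s :=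
  fun h' => absurd h' h

lemma pt_ne_apex (β : κ) (m : ℕ) : (pt β m : Fan κ) ≠ apex :=
  Option.some_ne_none _

lemma pt_inj {β γ : κ} {m k : ℕ} : (pt β m : Fan κ) = pt γ k ↔ β = γ ∧ m = k :=
  Option.some_inj.trans Prod.ext_iff

lemma isOpen_singleton_pt (β : κ) (m : ℕ) : IsOpen ({pt β m} : Set (Fan κ)) :=
  isOpen_of_apex_notMem fun h => pt_ne_apex β m h.symm

instance : T1Space (Fan κ) :=
  ⟨fun _ => isClosed_iff.2 fun _ _ =>
    Set.Subsingleton.finite fun _ h₁ _ h₂ => (pt_inj.1 (h₁.trans h₂.symm)).2⟩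

instance : T2Space (Fan κ) := by
  refine ⟨fun x y hxy => ?_⟩
  rcases x with _ | ⟨β, m⟩
  · rcases y with _ | ⟨γ, k⟩
    · exact absurd rfl hxy
    · exact ⟨{pt γ k}ᶜ, {pt γ k}, isOpen_compl_singleton, isOpen_singleton_pt γ k,
        (pt_ne_apex γ k).symm, rfl, disjoint_compl_left⟩
  · exact ⟨{pt β m}, {pt β m}ᶜ, isOpen_singleton_pt β m, isOpen_compl_singleton, rfl,
      fun h => hxy h.symm, disjoint_compl_right⟩

lemma exists_forall_pt_mem_of_mem_nhds_apex {s : Set (Fan κ)} (hs : s ∈ 𝓝 (apex : Fan κ)) :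
    ∃ N : κ → ℕ, ∀ β m, N β ≤ m → (pt β m : Fan κ) ∈ s := by
  obtain ⟨t, hts, hto, hmem⟩ := mem_nhds_iff.mp hs
  have tail : ∀ β : κ, ∃ N, ∀ m, N ≤ m → (pt β m : Fan κ) ∈ t := fun β => by
    obtain ⟨N, hN⟩ := (hto hmem β).bddAbove
    exact ⟨N + 1, fun m hm => by_contra fun hmt => by have := hN hmt; omega⟩
  choose N hN using tail
  exact ⟨N, fun β m hm => hts (hN β m hm)⟩

lemma finite_setOf_exists_pt_mem {K : Set (Fan κ)} (hK : IsCompact K) :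
    {β : κ | ∃ m, pt β m ∈ K}.Finite := by
  choose! m hm using fun β (hβ : β ∈ {β : κ | ∃ m, pt β m ∈ K}) => hβ
  set D := (fun β => (pt β (m β) : Fan κ)) '' {β | ∃ m, pt β m ∈ K}
  have hDclosed : IsClosed D := isClosed_iff.2 fun _ β =>
    (Set.finite_singleton (m β)).subset fun _ ⟨_, _, he⟩ => by
      obtain ⟨rfl, rfl⟩ := pt_inj.1 he; rfl
  have hDdiscrete : IsDiscrete D := isDiscrete_iff_forall_mem_exists_isOpen.2 fun _ ⟨β, hβ, he⟩ =>
    ⟨{pt β (m β)}, isOpen_singleton_pt β (m β), he ▸ Set.singleton_inter_of_mem ⟨β, hβ, rfl⟩⟩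
  have hDfinite : D.Finite :=
    (hK.of_isClosed_subset hDclosed (by rintro _ ⟨β, hβ, rfl⟩; exact hm β hβ)).finite hDdiscrete
  exact hDfinite.of_finite_image fun β _ γ _ he => (pt_inj.1 he).1

def map (σ : κ → κ') : Fan κ → Fan κ' := Option.map (Prod.map σ id)

lemma continuous_map (σ : κ → κ') : Continuous (map σ) :=
  continuous_def.2 fun _ hs h β => hs h (σ β)

end Fan

lemma infinite_setOf_infinite_setOf_lt {ι : Type*} {f : ι → ℕ → ℕ}
    (hf : ∀ g : ℕ → ℕ, ∃ α, {n | g n < f α n}.Infinite) (g : ℕ → ℕ) :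
    {α | {n | g n < f α n}.Infinite}.Infinite := by
  intro hfin
  obtain ⟨α, hα⟩ := hf fun n => max (g n) (hfin.toFinset.sup fun β => f β n)
  have hα_mem : α ∈ hfin.toFinset :=
    hfin.mem_toFinset.2 (hα.mono fun _ (hn : _ < f α _) => (le_max_left _ _).trans_lt hn)
  obtain ⟨n, hn⟩ := hα.nonempty
  exact hn.not_ge ((Finset.le_sup (f := fun β => f β n) hα_mem).trans (le_max_right _ _))

section FanPairs

variable {ι : Type*} (f : ι → ℕ → ℕ)

def fanPairs (α : ι) : Set (Fan ℕ × Fan ι) :=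
  {p | ∃ n m : ℕ, m ≤ f α n ∧ p = (Fan.pt n m, Fan.pt α m)}

lemma isOpen_fanPairs (α : ι) : IsOpen (fanPairs f α) :=
  isOpen_iff_forall_mem_open.2 fun p ⟨n, m, hm, hp⟩ =>
    ⟨{p}, singleton_subset_iff.2 ⟨n, m, hm, hp⟩,
      hp ▸ singleton_prod_singleton ▸ (Fan.isOpen_singleton_pt n m).prod
        (Fan.isOpen_singleton_pt α m), rfl⟩

lemma fanPairs_eq (α : ι) :
    fanPairs f α = Prod.fst ⁻¹' {x | ∃ n m : ℕ, m ≤ f α n ∧ x = Fan.pt n m} ∩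
      {p | Fan.map (fun _ => α) p.1 = p.2} := by
  ext ⟨x, y⟩
  constructor
  · rintro ⟨n, m, hm, hp⟩
    obtain ⟨rfl, rfl⟩ := Prod.ext_iff.1 hp
    exact ⟨⟨n, m, hm, rfl⟩, rfl⟩
  · rintro ⟨⟨n, m, hm, rfl⟩, rfl : Fan.pt α m = y⟩
    exact ⟨n, m, hm, rfl⟩

lemma isClosed_fanPairs (α : ι) : IsClosed (fanPairs f α) := by
  have hbase : IsClosed {x : Fan ℕ | ∃ n m : ℕ, m ≤ f α n ∧ x = Fan.pt n m} :=
    Fan.isClosed_iff.2 fun _ n => (finite_Iic (f α n)).subset fun _ ⟨_, _, hm, he⟩ => by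
      obtain ⟨rfl, rfl⟩ := Fan.pt_inj.1 he
      exact hm
  rw [fanPairs_eq]
  exact (hbase.preimage continuous_fst).inter
    (isClosed_eq ((Fan.continuous_map _).comp continuous_fst) continuous_snd)

lemma finite_setOf_fanPairs_inter_nonempty {K : Set (Fan ℕ × Fan ι)} (hK : IsCompact K) :
    {α | (fanPairs f α ∩ K).Nonempty}.Finite :=
  (Fan.finite_setOf_exists_pt_mem (hK.image continuous_snd)).subset
    fun _ ⟨_, ⟨_, m, _, rfl⟩, hpK⟩ => ⟨m, _, hpK, rfl⟩

variable {f}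

lemma infinite_setOf_fanPairs_inter_nonempty
    (hf : ∀ g : ℕ → ℕ, ∃ α, {n | g n < f α n}.Infinite)
    {V : Set (Fan ℕ × Fan ι)} (hV : V ∈ 𝓝 (Fan.apex, Fan.apex)) :
    {α | (fanPairs f α ∩ V).Nonempty}.Infinite := by
  obtain ⟨u, hu, v, hv, huv⟩ := mem_nhds_prod_iff.1 hV
  obtain ⟨N, hN⟩ := Fan.exists_forall_pt_mem_of_mem_nhds_apex hu
  obtain ⟨M, hM⟩ := Fan.exists_forall_pt_mem_of_mem_nhds_apex hv
  refine Set.Infinite.mono (fun α hα => ?_)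
    (infinite_setOf_infinite_setOf_lt hf fun n => max (N n) n)
  obtain ⟨n, hn, hMn⟩ := hα.exists_gt (M α)
  exact ⟨_, ⟨n, f α n, le_rfl, rfl⟩,
    huv ⟨hN n _ (le_of_max_le_left hn.le), hM α _ (hMn.trans ((le_max_right _ _).trans_lt hn)).le⟩⟩

end FanPairs

theorem fan_product_clopen_fan_general (ι : Type)
    (f : ι → ℕ → ℕ)
    (hf : ∀ g : ℕ → ℕ, ∃ α : ι, {n : ℕ | g n < f α n}.Infinite)
    (G : ι → Set (Fan ℕ × Fan ι))
    (hG : ∀ α, G α = {p | ∃ n m : ℕ, m ≤ f α n ∧ p = (Fan.pt n m, Fan.pt α m)}) :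
    (∀ α, IsClopen (G α)) ∧
    (∀ K : Set (Fan ℕ × Fan ι), IsCompact K → {α : ι | (G α ∩ K).Nonempty}.Finite) ∧
    ((Fan.apex, Fan.apex) ∈ closure (⋃ α, G α)) ∧
    ¬ ∃ V ∈ 𝓝 (((Fan.apex : Fan ℕ), (Fan.apex : Fan ι))),
        {α : ι | (G α ∩ V).Nonempty}.Finite := by
  obtain rfl : G = fanPairs f := funext hG
  have hmeets : ∀ V ∈ 𝓝 ((Fan.apex : Fan ℕ), (Fan.apex : Fan ι)),
      {α | (fanPairs f α ∩ V).Nonempty}.Infinite :=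
    fun _ hV => infinite_setOf_fanPairs_inter_nonempty hf hV
  refine ⟨fun α => ⟨isClosed_fanPairs f α, isOpen_fanPairs f α⟩,
    fun _ hK => finite_setOf_fanPairs_inter_nonempty f hK, ?_,
    fun ⟨V, hV, hfin⟩ => hmeets V hV hfin⟩
  refine mem_closure_iff_nhds.2 fun V hV => ?_
  obtain ⟨α, p, hpG, hpV⟩ := (hmeets V hV).nonempty
  exact ⟨p, hpV, mem_iUnion.2 ⟨α, hpG⟩⟩

/-- Given an `ω₁`-indexed family of functions witnessing `𝔟 ≤ ω₁`, the sets
`G_α = {(a(n,m), x(α,m)) : m ≤ f_α(n)}` are clopen in `S_ω × S_{ω₁}`, the family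
`{G_α}` is compact-finite, and `(a₀, ∞)` lies in the closure of `⋃ G_α`; hence
`{G_α}` is not locally finite at `(a₀, ∞)`. -/
theorem fan_product_clopen_fan (ι : Type) (hι : #ι = aleph 1)
    (f : ι → ℕ → ℕ)
    (hf : ∀ g : ℕ → ℕ, ∃ α : ι, {n : ℕ | g n < f α n}.Infinite)
    (G : ι → Set (Fan ℕ × Fan ι))
    (hG : ∀ α, G α = {p | ∃ n m : ℕ, m ≤ f α n ∧ p = (Fan.pt n m, Fan.pt α m)}) :
    (∀ α, IsClopen (G α)) ∧
    (∀ K : Set (Fan ℕ × Fan ι), IsCompact K → {α : ι | (G α ∩ K).Nonempty}.Finite) ∧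
    ((Fan.apex, Fan.apex) ∈ closure (⋃ α, G α)) ∧
    ¬ ∃ V ∈ 𝓝 (((Fan.apex : Fan ℕ), (Fan.apex : Fan ι))),
        {α : ι | (G α ∩ V).Nonempty}.Finite :=
  fan_product_clopen_fan_general ι f hf G hG
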